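/- arXiv:math/0306365 — 4 statements merged into one kernel-verified Lean document; each statement's English description precedes it below -/
import Mathlib

section
/- Let Q : {(s,t) : 0 ≤ s < t ≤ 1} → (0,1] be a function that is jointly continuous, satisfies Q(r,t) = Q(r,s)·Q(s,t) whenever 0 ≤ r < s < t ≤ 1, and satisfies Q(s,t) → 1 as t − s → 0. Then there exists a finite nonatomic Borel measure ν on [0,1] such that Q(s,t) = exp(−ν((s,t))) for all 0 ≤ s < t ≤ 1. -/
/-!
Taking logarithms turns multiplicativity into additivity: `F(t) = -log Q(0,t)` satisfies
`F(t) - F(s) = -log Q(s,t)`, so it is nondecreasing on `[0,1]` because `Q ≤ 1`, and it is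
continuous there because `Q(s,t) → 1` uniformly as `t - s → 0`. The Lebesgue–Stieltjes measure
of `F`, restricted to `[0,1]`, is then finite and nonatomic and gives `(s,t)` the mass
`F(t) - F(s) = -log Q(s,t)`.
-/

open Set MeasureTheory Function

theorem MonotoneOn.exists_measure_Ioo_eq_sub {a b : ℝ} {g : ℝ → ℝ}
    (hmono : MonotoneOn g (Icc a b)) (hab : a ≤ b) (hcont : ContinuousOn g (Icc a b)) :
    ∃ ν : Measure ℝ, IsFiniteMeasure ν ∧ (∀ x, ν {x} = 0) ∧ ν (Icc a b)ᶜ = 0 ∧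
      ∀ s t, a ≤ s → s ≤ t → t ≤ b → ν (Ioo s t) = ENNReal.ofReal (g t - g s) := by
  set G := IccExtend hab ((Icc a b).domRestrict g)
  have hG : Continuous G := continuous_IccExtend_iff.2 hcont.domRestrict
  let F : StieltjesFunction ℝ :=
    ⟨G, (monotoneOn_iff_monotone.1 hmono).IccExtend hab, fun _ => hG.continuousWithinAt⟩
  have hleft : ∀ x, leftLim F x = F x := fun x => hG.continuousWithinAt.leftLim_eq
  have hfin : F.measure (Icc a b) ≠ ⊤ := by simp [F.measure_Icc]
  refine ⟨F.measure.restrict (Icc a b), isFiniteMeasure_restrict.2 hfin, fun x => ?_, by simp,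
    fun s t hs hst ht => ?_⟩
  · refine le_antisymm ((Measure.restrict_apply_le _ _).trans ?_) bot_le
    simp [F.measure_singleton, hleft]
  · rw [Measure.restrict_apply measurableSet_Ioo,
      inter_eq_left.2 (Ioo_subset_Icc_self.trans (Icc_subset_Icc hs ht)), F.measure_Ioo, hleft]
    simp [F, G, IccExtend_of_mem hab _ ⟨hs, hst.trans ht⟩,
      IccExtend_of_mem hab _ ⟨hs.trans hst, ht⟩]

theorem Real.neg_log_lt_of_abs_sub_one_lt {q ε : ℝ} (h : |q - 1| < 1 - Real.exp (-ε)) :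
    -Real.log q < ε := by
  have hq : Real.exp (-ε) < q := by linarith [neg_abs_le (q - 1)]
  linarith [(Real.lt_log_iff_exp_lt (Real.exp_pos _ |>.trans hq)).2 hq]

/-- `Q 0 0` is not part of the data, so the value at `0` is fixed by hand. -/
noncomputable def cumulativeHazard (Q : ℝ → ℝ → ℝ) (t : ℝ) : ℝ :=
  if t = 0 then 0 else -Real.log (Q 0 t)

section
variable {Q : ℝ → ℝ → ℝ}

theorem cumulativeHazard_sub (hpos : ∀ s t : ℝ, 0 ≤ s → s < t → t ≤ 1 → 0 < Q s t)
    (hmul : ∀ r s t : ℝ, 0 ≤ r → r < s → s < t → t ≤ 1 → Q r t = Q r s * Q s t)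
    {s t : ℝ} (hs : 0 ≤ s) (hst : s < t) (ht : t ≤ 1) :
    cumulativeHazard Q t - cumulativeHazard Q s = -Real.log (Q s t) := by
  rcases hs.eq_or_lt with rfl | hs
  · simp [cumulativeHazard, hst.ne']
  · simp only [cumulativeHazard, hs.ne', (hs.trans hst).ne', if_false,
      hmul 0 s t le_rfl hs hst ht,
      Real.log_mul (hpos 0 s le_rfl hs (hst.le.trans ht)).ne' (hpos s t hs.le hst ht).ne']
    ring

theorem monotoneOn_cumulativeHazard (hpos : ∀ s t : ℝ, 0 ≤ s → s < t → t ≤ 1 → 0 < Q s t)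
    (hle : ∀ s t : ℝ, 0 ≤ s → s < t → t ≤ 1 → Q s t ≤ 1)
    (hmul : ∀ r s t : ℝ, 0 ≤ r → r < s → s < t → t ≤ 1 → Q r t = Q r s * Q s t) :
    MonotoneOn (cumulativeHazard Q) (Icc 0 1) := by
  refine monotoneOn_iff_forall_lt.2 fun s hs t ht hst => sub_nonneg.1 ?_
  rw [cumulativeHazard_sub hpos hmul hs.1 hst ht.2, neg_nonneg]
  exact Real.log_nonpos (hpos s t hs.1 hst ht.2).le (hle s t hs.1 hst ht.2)

theorem continuousOn_cumulativeHazard (hpos : ∀ s t : ℝ, 0 ≤ s → s < t → t ≤ 1 → 0 < Q s t)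
    (hle : ∀ s t : ℝ, 0 ≤ s → s < t → t ≤ 1 → Q s t ≤ 1)
    (hmul : ∀ r s t : ℝ, 0 ≤ r → r < s → s < t → t ≤ 1 → Q r t = Q r s * Q s t)
    (hlim : ∀ ε > (0:ℝ), ∃ δ > (0:ℝ), ∀ s t : ℝ, 0 ≤ s → s < t → t ≤ 1 →
      t - s < δ → |Q s t - 1| < ε) :
    ContinuousOn (cumulativeHazard Q) (Icc 0 1) := by
  refine Metric.continuousOn_iff.2 fun x hx ε hε => ?_
  obtain ⟨δ, hδ, hQ⟩ := hlim (1 - Real.exp (-ε)) (by simpa using hε)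
  refine ⟨δ, hδ, fun y hy hxy => ?_⟩
  wlog hxy' : x ≤ y generalizing x y
  · rw [dist_comm] at hxy ⊢
    exact this y hy x hx hxy (le_of_not_ge hxy')
  rcases hxy'.eq_or_lt with rfl | hlt
  · simpa using hε
  have hincr := monotoneOn_cumulativeHazard hpos hle hmul hx hy hxy'
  rw [Real.dist_eq, abs_of_nonneg (sub_nonneg.2 hincr),
    cumulativeHazard_sub hpos hmul hx.1 hlt hy.2]
  rw [Real.dist_eq, abs_of_nonneg (sub_nonneg.2 hxy')] at hxy
  exact Real.neg_log_lt_of_abs_sub_one_lt (hQ x y hx.1 hlt hy.2 hxy)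

end

theorem multiplicative_functional_exponential_general (Q : ℝ → ℝ → ℝ)
    (hrange : ∀ s t : ℝ, 0 ≤ s → s < t → t ≤ 1 → 0 < Q s t ∧ Q s t ≤ 1)
    (hmul : ∀ r s t : ℝ, 0 ≤ r → r < s → s < t → t ≤ 1 → Q r t = Q r s * Q s t)
    (hlim : ∀ ε > (0:ℝ), ∃ δ > (0:ℝ), ∀ s t : ℝ, 0 ≤ s → s < t → t ≤ 1 →
      t - s < δ → |Q s t - 1| < ε) :
    ∃ ν : Measure ℝ, IsFiniteMeasure ν ∧ (∀ x : ℝ, ν {x} = 0) ∧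
      ν ((Icc (0:ℝ) 1)ᶜ) = 0 ∧
      ∀ s t : ℝ, 0 ≤ s → s < t → t ≤ 1 →
        Q s t = Real.exp (-(ν (Ioo s t)).toReal) := by
  have hpos := fun s t hs hst ht => (hrange s t hs hst ht).1
  have hle := fun s t hs hst ht => (hrange s t hs hst ht).2
  obtain ⟨ν, hfin, hatom, hsupp, hν⟩ :=
    (monotoneOn_cumulativeHazard hpos hle hmul).exists_measure_Ioo_eq_sub zero_le_one
      (continuousOn_cumulativeHazard hpos hle hmul hlim)
  refine ⟨ν, hfin, hatom, hsupp, fun s t hs hst ht => ?_⟩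
  have hlog : Real.log (Q s t) ≤ 0 := Real.log_nonpos (hpos s t hs hst ht).le (hle s t hs hst ht)
  rw [hν s t hs hst.le ht, cumulativeHazard_sub hpos hmul hs hst ht,
    ENNReal.toReal_ofReal (neg_nonneg.2 hlog), neg_neg, Real.exp_log (hpos s t hs hst ht)]

/-- A continuous multiplicative functional `Q(s,t)` on intervals, tending to 1 as the
interval shrinks, is of the form `exp(-ν((s,t)))` for a finite nonatomic Borel measure ν
on `[0,1]`. -/
theorem multiplicative_functional_exponential (Q : ℝ → ℝ → ℝ)
    (hrange : ∀ s t : ℝ, 0 ≤ s → s < t → t ≤ 1 → 0 < Q s t ∧ Q s t ≤ 1)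
    (hmul : ∀ r s t : ℝ, 0 ≤ r → r < s → s < t → t ≤ 1 → Q r t = Q r s * Q s t)
    (hcont : ContinuousOn (fun p : ℝ × ℝ => Q p.1 p.2)
      {p : ℝ × ℝ | 0 ≤ p.1 ∧ p.1 < p.2 ∧ p.2 ≤ 1})
    (hlim : ∀ ε > (0:ℝ), ∃ δ > (0:ℝ), ∀ s t : ℝ, 0 ≤ s → s < t → t ≤ 1 →
      t - s < δ → |Q s t - 1| < ε) :
    ∃ ν : Measure ℝ, IsFiniteMeasure ν ∧ (∀ x : ℝ, ν {x} = 0) ∧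
      ν ((Icc (0:ℝ) 1)ᶜ) = 0 ∧
      ∀ s t : ℝ, 0 ≤ s → s < t → t ≤ 1 →
        Q s t = Real.exp (-(ν (Ioo s t)).toReal) :=
  multiplicative_functional_exponential_general Q hrange hmul hlim
end

section
/- Let μ be a Borel probability measure on the space 𝔉_𝕋 of closed subsets of the circle 𝕋 = ℝ/ℤ. Assume: (a) for every n ∈ ℕ, μ is equivalent to the convolution (with respect to union) of its restrictions to the 2ⁿ dyadic arcs, i.e., μ ∼ μ_{0,2^{-n}} * μ_{2^{-n},2·2^{-n}} * ⋯ * μ_{1−2^{-n},1}, where μ_{s,t} is the image of μ under Z ↦ Z ∩ [s,t]; and (b) Z₁ ∩ Z₂ = ∅ for μ⊗μ-almost all pairs (Z₁,Z₂). Then μ * μ is equivalent to μ, where * denotes convolution with respect to union of closed sets. -/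
open MeasureTheory Set

noncomputable section

/-- The circle 𝕋 = ℝ/ℤ. -/
abbrev Torus : Type := AddCircle (1 : ℝ)

/-- The space 𝔉_𝕋 of closed subsets of the circle. -/
def TClosed : Type := {Z : Set Torus // IsClosed Z}

/-- The Effros–Borel measurable structure on 𝔉_𝕋, generated by hitting events of open sets
(this is the Borel structure of the Fell topology). -/
instance : MeasurableSpace TClosed :=
  MeasurableSpace.generateFrom
    {S | ∃ G : Set Torus, IsOpen G ∧ S = {Z : TClosed | (Z.1 ∩ G).Nonempty}}

/-- Union of closed sets. -/
def tUnion (Z₁ Z₂ : TClosed) : TClosed := ⟨Z₁.1 ∪ Z₂.1, Z₁.2.union Z₂.2⟩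

/-- Convolution of measures on 𝔉_𝕋 with respect to union. -/
def tconv (μ₁ μ₂ : Measure TClosed) : Measure TClosed :=
  (μ₁.prod μ₂).map fun p => tUnion p.1 p.2

/-- The closed arc of the circle which is the image of `[s,t] ⊆ ℝ`. -/
def arc (s t : ℝ) : Set Torus := ((↑) : ℝ → Torus) '' Icc s t

/-- Z ↦ Z ∩ [s,t]. -/
def restrictArc (harc : ∀ s t : ℝ, IsClosed (arc s t)) (s t : ℝ) (Z : TClosed) : TClosed :=
  ⟨Z.1 ∩ arc s t, Z.2.inter (harc s t)⟩

/-- The convolution `μ_{0,2⁻ⁿ} * μ_{2⁻ⁿ,2·2⁻ⁿ} * ⋯ * μ_{1-2⁻ⁿ,1}` of the images of μ under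
the restrictions to the 2ⁿ dyadic arcs. -/
def dyadicConv (harc : ∀ s t : ℝ, IsClosed (arc s t)) (μ : Measure TClosed) (n : ℕ) :
    Measure TClosed :=
  ((List.range (2 ^ n)).map fun k =>
      μ.map (restrictArc harc ((k : ℝ) / 2 ^ n) (((k : ℝ) + 1) / 2 ^ n))).foldr
    tconv (Measure.dirac (⟨∅, isClosed_empty⟩ : TClosed))

-- ### auxiliary development

namespace ConvAux

/-- The empty closed set. -/
def emptyT : TClosed := ⟨∅, isClosed_empty⟩

lemma meas_hit {G : Set Torus} (hG : IsOpen G) :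
    MeasurableSet {Z : TClosed | (Z.1 ∩ G).Nonempty} :=
  MeasurableSpace.measurableSet_generateFrom ⟨G, hG, rfl⟩

lemma meas_hit_closed {C : Set Torus} (hC : IsClosed C) :
    MeasurableSet {Z : TClosed | (Z.1 ∩ C).Nonempty} := by
  have key : {Z : TClosed | (Z.1 ∩ C).Nonempty}ᶜ =
      ⋃ m : ℕ, {Z : TClosed | (Z.1 ∩ Metric.thickening (1 / (m + 1)) C).Nonempty}ᶜ := by
    ext Z
    simp only [mem_compl_iff, mem_iUnion, mem_setOf_eq, not_nonempty_iff_eq_empty,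
      ← disjoint_iff_inter_eq_empty]
    constructor
    · intro h
      obtain ⟨δ, hδ, hdisj⟩ := h.exists_thickenings Z.2.isCompact hC
      obtain ⟨m, hm⟩ := exists_nat_one_div_lt hδ
      refine ⟨m, ?_⟩
      have h1 : Z.1 ⊆ Metric.thickening δ Z.1 := Metric.self_subset_thickening hδ _
      have h2 : Metric.thickening (1 / (m + 1)) C ⊆ Metric.thickening δ C :=
        Metric.thickening_mono hm.le _
      exact Disjoint.mono h1 h2 hdisj
    · rintro ⟨m, hm⟩
      have : C ⊆ Metric.thickening (1 / (m + 1)) C :=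
        Metric.self_subset_thickening (by positivity) _
      exact hm.mono_right this
  have : MeasurableSet ({Z : TClosed | (Z.1 ∩ C).Nonempty}ᶜ) := by
    rw [key]
    exact MeasurableSet.iUnion fun m => (meas_hit Metric.isOpen_thickening).compl
  simpa using this.compl

lemma meas_hit_closed_inter_open {C G : Set Torus} (hC : IsClosed C) (hG : IsOpen G) :
    MeasurableSet {Z : TClosed | (Z.1 ∩ (C ∩ G)).Nonempty} := by
  have key : {Z : TClosed | (Z.1 ∩ (C ∩ G)).Nonempty} =
      ⋃ m : ℕ, {Z : TClosed |
        (Z.1 ∩ (C ∩ (Metric.thickening (1 / (m + 1)) Gᶜ)ᶜ)).Nonempty} := by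
    ext Z
    simp only [mem_iUnion, mem_setOf_eq]
    constructor
    · rintro ⟨x, hxZ, hxC, hxG⟩
      obtain ⟨ε, hε, hball⟩ := Metric.isOpen_iff.mp hG x hxG
      obtain ⟨m, hm⟩ := exists_nat_one_div_lt hε
      refine ⟨m, x, hxZ, hxC, fun hx => ?_⟩
      obtain ⟨z, hz, hdz⟩ := Metric.mem_thickening_iff.mp hx
      exact hz (hball (Metric.mem_ball.mpr (by rw [dist_comm]; exact hdz.trans hm)))
    · rintro ⟨m, x, hxZ, hxC, hx⟩
      refine ⟨x, hxZ, hxC, ?_⟩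
      by_contra hxG
      exact hx (Metric.self_subset_thickening (by positivity) _ hxG)
  rw [key]
  exact MeasurableSet.iUnion fun m =>
    meas_hit_closed (hC.inter Metric.isOpen_thickening.isClosed_compl)

lemma meas_not_subset {C : Set Torus} (hC : IsClosed C) :
    MeasurableSet {Z : TClosed | ¬ Z.1 ⊆ C} := by
  have : {Z : TClosed | ¬ Z.1 ⊆ C} = {Z : TClosed | (Z.1 ∩ Cᶜ).Nonempty} := by
    ext Z
    simp [Set.not_subset, Set.inter_compl_nonempty_iff]
  rw [this]
  exact meas_hit hC.isOpen_compl

lemma meas_misses {C : Set Torus} (hC : IsClosed C) :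
    MeasurableSet {Z : TClosed | Z.1 ∩ C = ∅} := by
  have : {Z : TClosed | Z.1 ∩ C = ∅} = {Z : TClosed | (Z.1 ∩ C).Nonempty}ᶜ := by
    ext Z; simp [not_nonempty_iff_eq_empty]
  rw [this]
  exact (meas_hit_closed hC).compl

lemma meas_singleton_empty : MeasurableSet ({emptyT} : Set TClosed) := by
  have : ({emptyT} : Set TClosed) = {Z : TClosed | (Z.1 ∩ (univ : Set Torus)).Nonempty}ᶜ := by
    ext Z
    simp only [mem_singleton_iff, mem_compl_iff, mem_setOf_eq, inter_univ,
      not_nonempty_iff_eq_empty, emptyT]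
    exact Subtype.ext_iff
  rw [this]
  exact (meas_hit isOpen_univ).compl

lemma meas_restrictArc (harc : ∀ s t : ℝ, IsClosed (arc s t)) (s t : ℝ) :
    Measurable (restrictArc harc s t) := by
  apply measurable_generateFrom
  rintro S ⟨G, hG, rfl⟩
  have : restrictArc harc s t ⁻¹' {Z : TClosed | (Z.1 ∩ G).Nonempty} =
      {Z : TClosed | (Z.1 ∩ (arc s t ∩ G)).Nonempty} := by
    ext Z
    simp only [mem_preimage, mem_setOf_eq, restrictArc, inter_assoc]
    show ((Z.1 ∩ arc s t) ∩ G).Nonempty ↔ (Z.1 ∩ (arc s t ∩ G)).Nonempty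
    rw [inter_assoc]
  rw [this]
  exact meas_hit_closed_inter_open (harc s t) hG

lemma meas_tUnion : Measurable (fun p : TClosed × TClosed => tUnion p.1 p.2) := by
  apply measurable_generateFrom
  rintro S ⟨G, hG, rfl⟩
  have : (fun p : TClosed × TClosed => tUnion p.1 p.2) ⁻¹' {Z : TClosed | (Z.1 ∩ G).Nonempty} =
      ({Z : TClosed | (Z.1 ∩ G).Nonempty} ×ˢ (univ : Set TClosed)) ∪
        ((univ : Set TClosed) ×ˢ {Z : TClosed | (Z.1 ∩ G).Nonempty}) := by
    ext p
    simp only [mem_preimage, mem_setOf_eq, tUnion, union_inter_distrib_right, union_nonempty,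
      mem_union, mem_prod, mem_univ, and_true, true_and]
    show ((p.1.1 ∪ p.2.1) ∩ G).Nonempty ↔ (p.1.1 ∩ G).Nonempty ∨ (p.2.1 ∩ G).Nonempty
    rw [union_inter_distrib_right, union_nonempty]
  rw [this]
  exact ((meas_hit hG).prod MeasurableSet.univ).union (MeasurableSet.univ.prod (meas_hit hG))

lemma meas_tUnion_left (V : TClosed) : Measurable (tUnion V) :=
  meas_tUnion.comp (measurable_const.prodMk measurable_id)

end ConvAux


namespace ConvAux

instance isProb_tconv (α β : Measure TClosed) [IsProbabilityMeasure α] [IsProbabilityMeasure β] :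
    IsProbabilityMeasure (tconv α β) :=
  Measure.isProbabilityMeasure_map meas_tUnion.aemeasurable

lemma isProb_foldr (l : List (Measure TClosed)) (hl : ∀ m ∈ l, IsProbabilityMeasure m) :
    IsProbabilityMeasure (l.foldr tconv (Measure.dirac emptyT)) := by
  induction l with
  | nil => simpa using (inferInstance : IsProbabilityMeasure (Measure.dirac emptyT))
  | cons hd tl ih =>
    have h1 : IsProbabilityMeasure hd := hl hd (List.mem_cons_self)
    have h2 : IsProbabilityMeasure (tl.foldr tconv (Measure.dirac emptyT)) :=
      ih fun m hm => hl m (List.mem_cons_of_mem _ hm)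
    simpa using isProb_tconv hd _

lemma tconv_apply (α β : Measure TClosed) {Y : Set TClosed} (hY : MeasurableSet Y) :
    tconv α β Y = (α.prod β) ((fun p : TClosed × TClosed => tUnion p.1 p.2) ⁻¹' Y) :=
  Measure.map_apply meas_tUnion hY

lemma tconv_apply' (α β : Measure TClosed) [SFinite β] {Y : Set TClosed}
    (hY : MeasurableSet Y) :
    tconv α β Y = ∫⁻ W, β {S : TClosed | tUnion W S ∈ Y} ∂α := by
  rw [tconv_apply α β hY, Measure.prod_apply (meas_tUnion hY)]
  rfl

lemma tUnion_empty_left (S : TClosed) : tUnion emptyT S = S :=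
  Subtype.ext (Set.empty_union _)

lemma tUnion_empty_right (S : TClosed) : tUnion S emptyT = S :=
  Subtype.ext (Set.union_empty _)

lemma tconv_singleton_empty (α β : Measure TClosed) [SFinite α] [SFinite β] :
    tconv α β {emptyT} = α {emptyT} * β {emptyT} := by
  rw [tconv_apply α β meas_singleton_empty]
  have : (fun p : TClosed × TClosed => tUnion p.1 p.2) ⁻¹' {emptyT} =
      ({emptyT} : Set TClosed) ×ˢ ({emptyT} : Set TClosed) := by
    ext p
    simp only [mem_preimage, mem_singleton_iff, mem_prod]
    constructor
    · intro h
      have h' : p.1.1 ∪ p.2.1 = ∅ := congrArg Subtype.val h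
      rw [Set.union_empty_iff] at h'
      exact ⟨Subtype.ext h'.1, Subtype.ext h'.2⟩
    · rintro ⟨h1, h2⟩
      rw [show p = (emptyT, emptyT) from Prod.ext h1 h2]
      exact tUnion_empty_left _
  rw [this, Measure.prod_prod]

lemma foldr_singleton_empty (l : List (Measure TClosed))
    (hl : ∀ m ∈ l, IsProbabilityMeasure m) :
    (l.foldr tconv (Measure.dirac emptyT)) {emptyT} =
      (l.map fun m => m {emptyT}).prod := by
  induction l with
  | nil => simp [Measure.dirac_apply_of_mem (mem_singleton _)]
  | cons hd tl ih =>
    haveI h1 : IsProbabilityMeasure hd := hl hd (List.mem_cons_self)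
    haveI h2 : IsProbabilityMeasure (tl.foldr tconv (Measure.dirac emptyT)) :=
      isProb_foldr tl fun m hm => hl m (List.mem_cons_of_mem _ hm)
    simp only [List.foldr_cons, List.map_cons, List.prod_cons,
      tconv_singleton_empty hd _, ih fun m hm => hl m (List.mem_cons_of_mem _ hm)]

/-- The interchange map `((a,b),(c,d)) ↦ ((a,c),(b,d))` is measure preserving. -/
lemma measurePreserving_interchange {α β γ δ : Type*} [MeasurableSpace α] [MeasurableSpace β]
    [MeasurableSpace γ] [MeasurableSpace δ]
    (μa : Measure α) (μb : Measure β) (μc : Measure γ) (μd : Measure δ)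
    [SFinite μa] [SFinite μb] [SFinite μc] [SFinite μd] :
    MeasurePreserving (fun q : (α × β) × γ × δ => ((q.1.1, q.2.1), (q.1.2, q.2.2)))
      ((μa.prod μb).prod (μc.prod μd)) ((μa.prod μc).prod (μb.prod μd)) := by
  have h1 := measurePreserving_prodAssoc μa μb (μc.prod μd)
  have h2 := (MeasurePreserving.id μa).prod
    ((measurePreserving_prodAssoc μb μc μd).symm MeasurableEquiv.prodAssoc)
  have h3 := (MeasurePreserving.id μa).prod
    ((Measure.measurePreserving_swap (μ := μb) (ν := μc)).prod (MeasurePreserving.id μd))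
  have h4 := (MeasurePreserving.id μa).prod (measurePreserving_prodAssoc μc μb μd)
  have h5 := (measurePreserving_prodAssoc μa μc (μb.prod μd)).symm MeasurableEquiv.prodAssoc
  have := h5.comp (h4.comp (h3.comp (h2.comp h1)))
  exact this

end ConvAux
namespace ConvAux

lemma meas_constraint (l : List (Set Torus × Measure TClosed)) (hl : ∀ p ∈ l, IsClosed p.1) :
    MeasurableSet {q : TClosed × TClosed | ∀ p ∈ l, q.1.1 ∩ p.1 = ∅ ∨ q.2.1 ∩ p.1 = ∅} := by
  have key : {q : TClosed × TClosed | ∀ p ∈ l, q.1.1 ∩ p.1 = ∅ ∨ q.2.1 ∩ p.1 = ∅} =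
      ⋂ p ∈ {p | p ∈ l}, (({Z : TClosed | Z.1 ∩ p.1 = ∅} ×ˢ (univ : Set TClosed)) ∪
        ((univ : Set TClosed) ×ˢ {Z : TClosed | Z.1 ∩ p.1 = ∅})) := by
    ext q
    simp only [mem_setOf_eq, mem_iInter, mem_union, mem_prod, mem_univ, and_true, true_and]
  rw [key]
  exact MeasurableSet.biInter l.finite_toSet.countable fun p hp =>
    ((meas_misses (hl p hp)).prod MeasurableSet.univ).union
      (MeasurableSet.univ.prod (meas_misses (hl p hp)))

lemma key_lemma (L : List (Set Torus × Measure TClosed)) :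
    (∀ p ∈ L, IsClosed p.1 ∧ IsProbabilityMeasure p.2 ∧ p.2 {Z : TClosed | ¬ Z.1 ⊆ p.1} = 0) →
    ∀ Y : Set TClosed, MeasurableSet Y →
      (((L.map Prod.snd).foldr tconv (Measure.dirac emptyT)).prod
          ((L.map Prod.snd).foldr tconv (Measure.dirac emptyT)))
        ({q : TClosed × TClosed | tUnion q.1 q.2 ∈ Y} ∩
          {q : TClosed × TClosed | ∀ p ∈ L, q.1.1 ∩ p.1 = ∅ ∨ q.2.1 ∩ p.1 = ∅})
        ≤ 2 ^ L.length * ((L.map Prod.snd).foldr tconv (Measure.dirac emptyT)) Y := by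
  have hu : Measurable (fun q : TClosed × TClosed => tUnion q.1 q.2) := meas_tUnion
  induction L with
  | nil =>
    intro _ Y hY
    simp only [List.map_nil, List.foldr_nil, List.length_nil, pow_zero, one_mul,
      Measure.dirac_prod_dirac]
    have hkey : Measure.dirac (emptyT, emptyT)
        ((fun q : TClosed × TClosed => tUnion q.1 q.2) ⁻¹' Y) = Measure.dirac emptyT Y := by
      rw [← Measure.map_apply hu hY, Measure.map_dirac' hu,
        show tUnion emptyT emptyT = emptyT from tUnion_empty_left _]
    exact le_trans (measure_mono inter_subset_left) hkey.le
  | cons hd tl ih =>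
    intro hL Y hY
    obtain ⟨hC, hρ, hsupp⟩ := hL hd (List.mem_cons_self)
    haveI := hρ
    have htl : ∀ p ∈ tl, IsClosed p.1 ∧ IsProbabilityMeasure p.2 ∧
        p.2 {Z : TClosed | ¬ Z.1 ⊆ p.1} = 0 :=
      fun p hp => hL p (List.mem_cons_of_mem _ hp)
    set ρ : Measure TClosed := hd.2 with hρdef
    set ν' : Measure TClosed := (tl.map Prod.snd).foldr tconv (Measure.dirac emptyT) with hν'def
    haveI hprobν' : IsProbabilityMeasure ν' := isProb_foldr _ (by
      intro m hm
      obtain ⟨p, hp, rfl⟩ := List.mem_map.mp hm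
      exact (htl p hp).2.1)
    set u : TClosed × TClosed → TClosed := fun q => tUnion q.1 q.2 with hu_def
    -- the relevant sets
    set S : Set (TClosed × TClosed) :=
      {q : TClosed × TClosed | tUnion q.1 q.2 ∈ Y} ∩
        {q : TClosed × TClosed | ∀ p ∈ hd :: tl, q.1.1 ∩ p.1 = ∅ ∨ q.2.1 ∩ p.1 = ∅} with hSdef
    have hSmeas : MeasurableSet S :=
      (hu hY).inter (meas_constraint (hd :: tl) fun p hp => (hL p hp).1)
    set B : Set TClosed := {Z : TClosed | ¬ Z.1 ⊆ hd.1} with hBdef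
    set N1 : Set ((TClosed × TClosed) × TClosed × TClosed) :=
      (B ×ˢ (univ : Set TClosed)) ×ˢ (univ : Set (TClosed × TClosed)) with hN1def
    set N2 : Set ((TClosed × TClosed) × TClosed × TClosed) :=
      (univ : Set (TClosed × TClosed)) ×ˢ (B ×ˢ (univ : Set TClosed)) with hN2def
    set T' : Set ((TClosed × TClosed) × TClosed × TClosed) :=
      {y : (TClosed × TClosed) × TClosed × TClosed |
        (y.1.1 = emptyT ∨ y.1.2 = emptyT) ∧ tUnion (tUnion y.1.1 y.1.2) (tUnion y.2.1 y.2.2) ∈ Y ∧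
          ∀ p ∈ tl, y.2.1.1 ∩ p.1 = ∅ ∨ y.2.2.1 ∩ p.1 = ∅} with hT'def
    set ψ : ((TClosed × TClosed) × TClosed × TClosed) →
        ((TClosed × TClosed) × TClosed × TClosed) :=
      fun q => ((q.1.1, q.2.1), (q.1.2, q.2.2)) with hψdef
    have hT'meas : MeasurableSet T' := by
      have h1 : MeasurableSet {y : (TClosed × TClosed) × TClosed × TClosed |
          y.1.1 = emptyT ∨ y.1.2 = emptyT} := by
        have : {y : (TClosed × TClosed) × TClosed × TClosed |
            y.1.1 = emptyT ∨ y.1.2 = emptyT} =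
            ((({emptyT} : Set TClosed) ×ˢ (univ : Set TClosed)) ×ˢ
              (univ : Set (TClosed × TClosed))) ∪
            ((((univ : Set TClosed) ×ˢ ({emptyT} : Set TClosed))) ×ˢ
              (univ : Set (TClosed × TClosed))) := by
          ext y
          simp only [mem_setOf_eq, mem_union, mem_prod, mem_univ, and_true, true_and,
            mem_singleton_iff]
        rw [this]
        exact (((meas_singleton_empty).prod MeasurableSet.univ).prod MeasurableSet.univ).union
          (((MeasurableSet.univ.prod meas_singleton_empty)).prod MeasurableSet.univ)
      have h2 : MeasurableSet {y : (TClosed × TClosed) × TClosed × TClosed |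
          tUnion (tUnion y.1.1 y.1.2) (tUnion y.2.1 y.2.2) ∈ Y} := by
        have hb : Measurable (fun y : (TClosed × TClosed) × TClosed × TClosed =>
            tUnion (tUnion y.1.1 y.1.2) (tUnion y.2.1 y.2.2)) :=
          hu.comp ((hu.comp measurable_fst).prodMk (hu.comp measurable_snd))
        exact hb hY
      have h3 : MeasurableSet {y : (TClosed × TClosed) × TClosed × TClosed |
          ∀ p ∈ tl, y.2.1.1 ∩ p.1 = ∅ ∨ y.2.2.1 ∩ p.1 = ∅} :=
        measurable_snd (meas_constraint tl fun p hp => (htl p hp).1)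
      exact h1.inter (h2.inter h3)
    -- rewrite the product measure
    have hfold : ((hd :: tl).map Prod.snd).foldr tconv (Measure.dirac emptyT) = tconv ρ ν' := by
      simp [hν'def, hρdef]
    rw [hfold]
    have hconv : tconv ρ ν' = (ρ.prod ν').map u := rfl
    have hprod : (tconv ρ ν').prod (tconv ρ ν') =
        ((ρ.prod ν').prod (ρ.prod ν')).map (Prod.map u u) := by
      rw [hconv, Measure.map_prod_map _ _ hu hu]
    have happly : ((tconv ρ ν').prod (tconv ρ ν')) S =
        ((ρ.prod ν').prod (ρ.prod ν')) (Prod.map u u ⁻¹' S) := by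
      rw [hprod, Measure.map_apply (hu.prodMap hu) hSmeas]
    -- the inclusion
    have hincl : Prod.map u u ⁻¹' S ⊆ (N1 ∪ N2) ∪ ψ ⁻¹' T' := by
      intro x hx
      simp only [hSdef, mem_preimage, Prod.map_apply, mem_inter_iff, mem_setOf_eq] at hx
      obtain ⟨hxY, hxCon⟩ := hx
      by_cases hW : x.1.1.1 ⊆ hd.1
      · by_cases hW' : x.2.1.1 ⊆ hd.1
        · right
          simp only [hψdef, hT'def, mem_preimage, mem_setOf_eq]
          refine ⟨?_, ?_, ?_⟩
          · rcases hxCon hd (List.mem_cons_self) with h | h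
            · left
              refine Subtype.ext ?_
              have : x.1.1.1 ∩ hd.1 = ∅ := eq_empty_of_subset_empty
                ((inter_subset_inter_left _ subset_union_left).trans h.subset)
              rwa [inter_eq_self_of_subset_left hW] at this
            · right
              refine Subtype.ext ?_
              have : x.2.1.1 ∩ hd.1 = ∅ := eq_empty_of_subset_empty
                ((inter_subset_inter_left _ subset_union_left).trans h.subset)
              rwa [inter_eq_self_of_subset_left hW'] at this
          · have heq : tUnion (tUnion x.1.1 x.2.1) (tUnion x.1.2 x.2.2) =
                tUnion (tUnion x.1.1 x.1.2) (tUnion x.2.1 x.2.2) := by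
              refine Subtype.ext ?_
              show (x.1.1.1 ∪ x.2.1.1) ∪ (x.1.2.1 ∪ x.2.2.1) =
                (x.1.1.1 ∪ x.1.2.1) ∪ (x.2.1.1 ∪ x.2.2.1)
              ext z
              simp only [mem_union]
              tauto
            rw [heq]
            exact hxY
          · intro p hp
            rcases hxCon p (List.mem_cons_of_mem _ hp) with h | h
            · left
              exact eq_empty_of_subset_empty
                ((inter_subset_inter_left _ subset_union_right).trans h.subset)
            · right
              exact eq_empty_of_subset_empty
                ((inter_subset_inter_left _ subset_union_right).trans h.subset)
        · left; right
          simp only [hN2def, mem_prod, mem_univ, true_and, and_true, hBdef, mem_setOf_eq]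
          exact hW'
      · left; left
        simp only [hN1def, mem_prod, mem_univ, true_and, and_true, hBdef, mem_setOf_eq]
        exact hW
    -- null sets
    have hN1 : ((ρ.prod ν').prod (ρ.prod ν')) N1 = 0 := by
      rw [hN1def, Measure.prod_prod, Measure.prod_prod]
      simp [hsupp]
    have hN2 : ((ρ.prod ν').prod (ρ.prod ν')) N2 = 0 := by
      rw [hN2def, Measure.prod_prod, Measure.prod_prod]
      simp [hsupp]
    -- the interchanged measure
    have hinterchange : ((ρ.prod ν').prod (ρ.prod ν')) (ψ ⁻¹' T') =
        ((ρ.prod ρ).prod (ν'.prod ν')) T' :=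
      (measurePreserving_interchange ρ ν' ρ ν').measure_preimage hT'meas.nullMeasurableSet
    -- Fubini on the interchanged measure
    have hfub : ((ρ.prod ρ).prod (ν'.prod ν')) T' =
        ∫⁻ w, (ν'.prod ν') (Prod.mk w ⁻¹' T') ∂(ρ.prod ρ) :=
      Measure.prod_apply hT'meas
    -- pointwise bound for the sections
    set f1 : TClosed → ENNReal := ({emptyT} : Set TClosed).indicator 1 with hf1def
    set g : TClosed → ENNReal := fun b => ν' (Prod.mk b ⁻¹' (u ⁻¹' Y)) with hgdef
    have hgmeas : Measurable g := measurable_measure_prodMk_left (hu hY)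
    have hf1meas : Measurable f1 := measurable_one.indicator meas_singleton_empty
    have hsection : ∀ w : TClosed × TClosed, (ν'.prod ν') (Prod.mk w ⁻¹' T') ≤
        2 ^ tl.length * (f1 w.1 * g w.2 + g w.1 * f1 w.2) := by
      intro w
      have hYv : ∀ V : TClosed, MeasurableSet (Prod.mk V ⁻¹' (u ⁻¹' Y)) :=
        fun V => (meas_tUnion_left V) hY
      by_cases h1 : w.1 = emptyT
      · have hsub : Prod.mk w ⁻¹' T' ⊆
            {q : TClosed × TClosed | tUnion q.1 q.2 ∈ Prod.mk w.2 ⁻¹' (u ⁻¹' Y)} ∩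
              {q : TClosed × TClosed | ∀ p ∈ tl, q.1.1 ∩ p.1 = ∅ ∨ q.2.1 ∩ p.1 = ∅} := by
          intro q hq
          simp only [hT'def, mem_preimage, mem_setOf_eq] at hq
          obtain ⟨-, hqY, hqCon⟩ := hq
          refine ⟨?_, hqCon⟩
          simp only [mem_setOf_eq, mem_preimage]
          show tUnion w.2 (tUnion q.1 q.2) ∈ Y
          have : tUnion w.1 w.2 = w.2 := by rw [h1]; exact tUnion_empty_left _
          rw [← this]
          exact hqY
        calc (ν'.prod ν') (Prod.mk w ⁻¹' T') ≤ _ := measure_mono hsub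
          _ ≤ 2 ^ tl.length * ν' (Prod.mk w.2 ⁻¹' (u ⁻¹' Y)) := ih htl _ (hYv w.2)
          _ ≤ 2 ^ tl.length * (f1 w.1 * g w.2 + g w.1 * f1 w.2) := by
              have : f1 w.1 = 1 := by rw [hf1def, h1]; simp [indicator_of_mem]
              rw [this]
              gcongr
              rw [hgdef]
              simp only [one_mul]
              exact le_add_right le_rfl
      · by_cases h2 : w.2 = emptyT
        · have hsub : Prod.mk w ⁻¹' T' ⊆
              {q : TClosed × TClosed | tUnion q.1 q.2 ∈ Prod.mk w.1 ⁻¹' (u ⁻¹' Y)} ∩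
                {q : TClosed × TClosed | ∀ p ∈ tl, q.1.1 ∩ p.1 = ∅ ∨ q.2.1 ∩ p.1 = ∅} := by
            intro q hq
            simp only [hT'def, mem_preimage, mem_setOf_eq] at hq
            obtain ⟨-, hqY, hqCon⟩ := hq
            refine ⟨?_, hqCon⟩
            simp only [mem_setOf_eq, mem_preimage]
            show tUnion w.1 (tUnion q.1 q.2) ∈ Y
            have : tUnion w.1 w.2 = w.1 := by rw [h2]; exact tUnion_empty_right _
            rw [← this]
            exact hqY
          calc (ν'.prod ν') (Prod.mk w ⁻¹' T') ≤ _ := measure_mono hsub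
            _ ≤ 2 ^ tl.length * ν' (Prod.mk w.1 ⁻¹' (u ⁻¹' Y)) := ih htl _ (hYv w.1)
            _ ≤ 2 ^ tl.length * (f1 w.1 * g w.2 + g w.1 * f1 w.2) := by
                have : f1 w.2 = 1 := by rw [hf1def, h2]; simp [indicator_of_mem]
                rw [this]
                gcongr
                rw [hgdef]
                simp only [mul_one]
                exact le_add_left le_rfl
        · have : Prod.mk w ⁻¹' T' = ∅ := by
            ext q
            simp only [hT'def, mem_preimage, mem_setOf_eq, mem_empty_iff_false, iff_false]
            rintro ⟨h | h, -, -⟩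
            exacts [h1 h, h2 h]
          rw [this]
          simp
    -- integrate the bound
    have hint : ∫⁻ w, (ν'.prod ν') (Prod.mk w ⁻¹' T') ∂(ρ.prod ρ) ≤
        2 ^ tl.length * (ρ {emptyT} * tconv ρ ν' Y + tconv ρ ν' Y * ρ {emptyT}) := by
      calc ∫⁻ w, (ν'.prod ν') (Prod.mk w ⁻¹' T') ∂(ρ.prod ρ)
          ≤ ∫⁻ w, 2 ^ tl.length * (f1 w.1 * g w.2 + g w.1 * f1 w.2) ∂(ρ.prod ρ) :=
            lintegral_mono hsection
        _ = 2 ^ tl.length * ((∫⁻ w, f1 w.1 * g w.2 ∂(ρ.prod ρ)) +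
              (∫⁻ w, g w.1 * f1 w.2 ∂(ρ.prod ρ))) := by
            rw [lintegral_const_mul' _ _ (by simp), lintegral_add_left
              (show Measurable fun w : TClosed × TClosed => f1 w.1 * g w.2 from
                (hf1meas.comp measurable_fst).mul (hgmeas.comp measurable_snd))]
        _ = 2 ^ tl.length * (ρ {emptyT} * tconv ρ ν' Y + tconv ρ ν' Y * ρ {emptyT}) := by
            rw [lintegral_prod_mul hf1meas.aemeasurable hgmeas.aemeasurable,
              lintegral_prod_mul hgmeas.aemeasurable hf1meas.aemeasurable,
              lintegral_indicator_one meas_singleton_empty]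
            have hgint : ∫⁻ b, g b ∂ρ = tconv ρ ν' Y := by
              rw [hgdef, ← Measure.prod_apply (hu hY), ← Measure.map_apply hu hY, hconv]
            rw [hgint]
    -- put everything together
    calc ((tconv ρ ν').prod (tconv ρ ν')) S
        = ((ρ.prod ν').prod (ρ.prod ν')) (Prod.map u u ⁻¹' S) := happly
      _ ≤ ((ρ.prod ν').prod (ρ.prod ν')) ((N1 ∪ N2) ∪ ψ ⁻¹' T') := measure_mono hincl
      _ ≤ ((ρ.prod ν').prod (ρ.prod ν')) (N1 ∪ N2) +
            ((ρ.prod ν').prod (ρ.prod ν')) (ψ ⁻¹' T') := measure_union_le _ _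
      _ ≤ (((ρ.prod ν').prod (ρ.prod ν')) N1 + ((ρ.prod ν').prod (ρ.prod ν')) N2) +
            ((ρ.prod ν').prod (ρ.prod ν')) (ψ ⁻¹' T') := by
          gcongr
          exact measure_union_le _ _
      _ = ((ρ.prod ρ).prod (ν'.prod ν')) T' := by rw [hN1, hN2, hinterchange]; ring
      _ ≤ 2 ^ tl.length * (ρ {emptyT} * tconv ρ ν' Y + tconv ρ ν' Y * ρ {emptyT}) := by
          rw [hfub]; exact hint
      _ ≤ 2 ^ tl.length * (1 * tconv ρ ν' Y + tconv ρ ν' Y * 1) := by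
          gcongr <;> exact prob_le_one
      _ = 2 ^ (hd :: tl).length * tconv ρ ν' Y := by
          simp only [List.length_cons]
          ring

end ConvAux

namespace ConvAux

lemma dist_arc_le {s t : ℝ} {x y : Torus} (hx : x ∈ arc s t) (hy : y ∈ arc s t) :
    dist x y ≤ t - s := by
  obtain ⟨a, ha, rfl⟩ := hx
  obtain ⟨b, hb, rfl⟩ := hy
  calc dist ((a : ℝ) : Torus) ((b : ℝ) : Torus) = ‖((a : ℝ) : Torus) - ((b : ℝ) : Torus)‖ :=
        dist_eq_norm _ _
    _ = ‖((a - b : ℝ) : Torus)‖ := by rw [AddCircle.coe_sub]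
    _ ≤ ‖(a - b : ℝ)‖ := QuotientAddGroup.norm_mk_le_norm
    _ = |a - b| := Real.norm_eq_abs _
    _ ≤ t - s := abs_sub_le_iff.mpr
        ⟨by linarith [ha.1, ha.2, hb.1, hb.2], by linarith [ha.1, ha.2, hb.1, hb.2]⟩

lemma exists_level {Z₁ Z₂ : TClosed} (h : ¬ (Z₁.1 ∩ Z₂.1).Nonempty) :
    ∃ n : ℕ, ∀ k : ℕ,
      Z₁.1 ∩ arc ((k : ℝ) / 2 ^ n) (((k : ℝ) + 1) / 2 ^ n) = ∅ ∨
        Z₂.1 ∩ arc ((k : ℝ) / 2 ^ n) (((k : ℝ) + 1) / 2 ^ n) = ∅ := by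
  have hdisj : Disjoint Z₁.1 Z₂.1 :=
    disjoint_iff_inter_eq_empty.mpr (not_nonempty_iff_eq_empty.mp h)
  obtain ⟨δ, hδ, hth⟩ := hdisj.exists_thickenings Z₁.2.isCompact Z₂.2
  obtain ⟨n, hn⟩ := exists_pow_lt_of_lt_one hδ (by norm_num : (1 : ℝ) / 2 < 1)
  refine ⟨n, fun k => ?_⟩
  by_contra hcon
  push_neg at hcon
  obtain ⟨h1, h2⟩ := hcon
  obtain ⟨x, hx1, hxarc⟩ := h1
  obtain ⟨y, hy1, hyarc⟩ := h2
  have hdxy : dist x y < δ := by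
    have hlen : ((k : ℝ) + 1) / 2 ^ n - (k : ℝ) / 2 ^ n = (1 / 2 : ℝ) ^ n := by
      rw [div_pow, one_pow]
      ring
    calc dist x y ≤ ((k : ℝ) + 1) / 2 ^ n - (k : ℝ) / 2 ^ n := dist_arc_le hxarc hyarc
      _ = (1 / 2 : ℝ) ^ n := hlen
      _ < δ := hn
  have hmem1 : y ∈ Metric.thickening δ Z₁.1 :=
    Metric.mem_thickening_iff.mpr ⟨x, hx1, by rwa [dist_comm]⟩
  have hmem2 : y ∈ Metric.thickening δ Z₂.1 := Metric.self_subset_thickening hδ _ hy1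
  exact Set.disjoint_left.mp hth hmem1 hmem2

end ConvAux


/-- If μ is equivalent to the convolution of its restrictions to the dyadic arcs for every n,
and two independent realisations are almost surely disjoint, then `μ * μ` is equivalent
to `μ`. -/
theorem conv_self_equivalent_of_disjoint
    (harc : ∀ s t : ℝ, IsClosed (arc s t))
    (μ : Measure TClosed) [IsProbabilityMeasure μ]
    (hfact : ∀ n : ℕ, μ ≪ dyadicConv harc μ n ∧ dyadicConv harc μ n ≪ μ)
    (hdisj : (μ.prod μ) {p : TClosed × TClosed | (p.1.1 ∩ p.2.1).Nonempty} = 0) :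
    tconv μ μ ≪ μ ∧ μ ≪ tconv μ μ := by
  classical
  have hu : Measurable (fun q : TClosed × TClosed => tUnion q.1 q.2) := ConvAux.meas_tUnion
  set L : ℕ → List (Set Torus × Measure TClosed) := fun n =>
    (List.range (2 ^ n)).map fun k =>
      (arc ((k : ℝ) / 2 ^ n) (((k : ℝ) + 1) / 2 ^ n),
        μ.map (restrictArc harc ((k : ℝ) / 2 ^ n) (((k : ℝ) + 1) / 2 ^ n))) with hLdef
  have hfold : ∀ n, ((L n).map Prod.snd).foldr tconv (Measure.dirac ConvAux.emptyT) =
      dyadicConv harc μ n := by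
    intro n
    simp only [hLdef, List.map_map]
    rfl
  have hmemL : ∀ (n : ℕ) (p : Set Torus × Measure TClosed), p ∈ L n → ∃ k : ℕ,
      p = (arc ((k : ℝ) / 2 ^ n) (((k : ℝ) + 1) / 2 ^ n),
        μ.map (restrictArc harc ((k : ℝ) / 2 ^ n) (((k : ℝ) + 1) / 2 ^ n))) := by
    intro n p hp
    simp only [hLdef, List.mem_map] at hp
    obtain ⟨x, hx, rfl⟩ := hp
    simp at hx
    obtain ⟨a, -, rfl⟩ := hx
    exact ⟨a, rfl⟩
  have hLgood : ∀ n, ∀ p ∈ L n, IsClosed p.1 ∧ IsProbabilityMeasure p.2 ∧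
      p.2 {Z : TClosed | ¬ Z.1 ⊆ p.1} = 0 := by
    intro n p hp
    obtain ⟨k, rfl⟩ := hmemL n p hp
    refine ⟨harc _ _,
      Measure.isProbabilityMeasure_map (ConvAux.meas_restrictArc harc _ _).aemeasurable, ?_⟩
    rw [Measure.map_apply (ConvAux.meas_restrictArc harc _ _)
      (ConvAux.meas_not_subset (harc _ _))]
    have : restrictArc harc ((k : ℝ) / 2 ^ n) (((k : ℝ) + 1) / 2 ^ n) ⁻¹'
        {Z : TClosed | ¬ Z.1 ⊆ arc ((k : ℝ) / 2 ^ n) (((k : ℝ) + 1) / 2 ^ n)} = ∅ := by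
      ext Z
      simp [restrictArc, inter_subset_right]
    rw [this]
    exact measure_empty
  have hLprob : ∀ n, ∀ m ∈ (L n).map Prod.snd, IsProbabilityMeasure m := by
    intro n m hm
    obtain ⟨p, hp, rfl⟩ := List.mem_map.mp hm
    exact (hLgood n p hp).2.1
  have hprobdy : ∀ n, IsProbabilityMeasure (dyadicConv harc μ n) := by
    intro n
    rw [← hfold n]
    exact ConvAux.isProb_foldr _ (hLprob n)
  have hhard : tconv μ μ ≪ μ := by
    refine Measure.AbsolutelyContinuous.mk fun Y hY hμY => ?_
    rw [ConvAux.tconv_apply μ μ hY]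
    have hcover : (fun q : TClosed × TClosed => tUnion q.1 q.2) ⁻¹' Y ⊆
        {p : TClosed × TClosed | (p.1.1 ∩ p.2.1).Nonempty} ∪
          ⋃ n : ℕ, ({q : TClosed × TClosed | tUnion q.1 q.2 ∈ Y} ∩
            {q : TClosed × TClosed | ∀ p ∈ L n, q.1.1 ∩ p.1 = ∅ ∨ q.2.1 ∩ p.1 = ∅}) := by
      intro q hq
      by_cases hD : q ∈ {p : TClosed × TClosed | (p.1.1 ∩ p.2.1).Nonempty}
      · exact Or.inl hD
      · obtain ⟨n, hn⟩ := ConvAux.exists_level hD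
        refine Or.inr (mem_iUnion.mpr ⟨n, hq, ?_⟩)
        intro p hp
        obtain ⟨k, rfl⟩ := hmemL n p hp
        exact hn k
    refine measure_mono_null hcover (measure_union_null hdisj (measure_iUnion_null ?_))
    intro n
    haveI := hprobdy n
    have habs : μ.prod μ ≪ (dyadicConv harc μ n).prod (dyadicConv harc μ n) :=
      Measure.AbsolutelyContinuous.prod (hfact n).1 (hfact n).1
    refine habs ?_
    have hk := ConvAux.key_lemma (L n) (hLgood n) Y hY
    rw [hfold n] at hk
    rw [(hfact n).2 hμY, mul_zero] at hk
    exact le_zero_iff.mp hk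
  have hempty : μ {ConvAux.emptyT} ≠ 0 := by
    intro h0
    have hzero : ∀ n : ℕ, ∃ k : ℕ,
        μ {Z : TClosed | Z.1 ∩ arc ((k : ℝ) / 2 ^ n) (((k : ℝ) + 1) / 2 ^ n) = ∅} = 0 := by
      intro n
      have hν0 : dyadicConv harc μ n {ConvAux.emptyT} = 0 := (hfact n).2 h0
      rw [← hfold n, ConvAux.foldr_singleton_empty _ (hLprob n)] at hν0
      have h0mem := (List.prod_eq_zero_iff).mp hν0
      rw [List.mem_map] at h0mem
      obtain ⟨m, hm, hm0⟩ := h0mem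
      obtain ⟨p, hp, rfl⟩ := List.mem_map.mp hm
      obtain ⟨k, rfl⟩ := hmemL n p hp
      refine ⟨k, ?_⟩
      rw [Measure.map_apply (ConvAux.meas_restrictArc harc _ _)
        ConvAux.meas_singleton_empty] at hm0
      convert hm0 using 2
      ext Z
      simp only [mem_setOf_eq, mem_preimage, mem_singleton_iff]
      constructor
      · intro h; exact Subtype.ext h
      · intro h; exact congrArg Subtype.val h
    choose kf hkf using hzero
    set Bad : ℕ → Set (TClosed × TClosed) := fun n =>
      ({Z : TClosed | Z.1 ∩ arc ((kf n : ℝ) / 2 ^ n) (((kf n : ℝ) + 1) / 2 ^ n) = ∅} ×ˢ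
        (univ : Set TClosed)) ∪
      ((univ : Set TClosed) ×ˢ
        {Z : TClosed | Z.1 ∩ arc ((kf n : ℝ) / 2 ^ n) (((kf n : ℝ) + 1) / 2 ^ n) = ∅})
      with hBaddef
    have hbad : ∀ n, (μ.prod μ) (Bad n) = 0 := by
      intro n
      refine measure_union_null ?_ ?_
      · rw [Measure.prod_prod, hkf n, zero_mul]
      · rw [Measure.prod_prod, hkf n, mul_zero]
    have htotal : (μ.prod μ)
        ({p : TClosed × TClosed | (p.1.1 ∩ p.2.1).Nonempty} ∪ ⋃ n, Bad n) = 0 :=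
      measure_union_null hdisj (measure_iUnion_null hbad)
    have huniv : ({p : TClosed × TClosed | (p.1.1 ∩ p.2.1).Nonempty} ∪ ⋃ n, Bad n) = univ := by
      refine eq_univ_of_forall fun q => ?_
      by_cases hD : q ∈ {p : TClosed × TClosed | (p.1.1 ∩ p.2.1).Nonempty}
      · exact Or.inl hD
      · obtain ⟨n, hn⟩ := ConvAux.exists_level hD
        refine Or.inr (mem_iUnion.mpr ⟨n, ?_⟩)
        rcases hn (kf n) with h | h
        · exact Or.inl ⟨h, mem_univ _⟩
        · exact Or.inr ⟨mem_univ _, h⟩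
    rw [huniv] at htotal
    simp [measure_univ] at htotal
  have hsoft : μ ≪ tconv μ μ := by
    refine Measure.AbsolutelyContinuous.mk fun Y hY hcY => ?_
    rw [ConvAux.tconv_apply μ μ hY] at hcY
    have hsub : ({ConvAux.emptyT} : Set TClosed) ×ˢ Y ⊆
        (fun q : TClosed × TClosed => tUnion q.1 q.2) ⁻¹' Y := by
      rintro ⟨Z1, Z2⟩ ⟨h1, h2⟩
      simp only [mem_singleton_iff] at h1
      simp only [mem_preimage]
      rw [h1, ConvAux.tUnion_empty_left]
      exact h2
    have hzero : (μ.prod μ) (({ConvAux.emptyT} : Set TClosed) ×ˢ Y) = 0 :=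
      measure_mono_null hsub hcY
    rw [Measure.prod_prod] at hzero
    rcases mul_eq_zero.mp hzero with h | h
    · exact absurd h hempty
    · exact h
  exact ⟨hhard, hsoft⟩

end
end

section
/- Let ω : {(s,t) : 0 ≤ s < t ≤ 1} → {0,1} satisfy ω(r,s)·ω(s,t) = ω(r,t) for 0 ≤ r < s < t ≤ 1. Then there exists a closed set Z ⊆ [0,1] such that ω(s,t) = 1 if and only if Z ∩ [s,t] = ∅ if and only if ω is upper semicontinuous (i.e., whenever ω(s,t) = 1 and sₙ → s, tₙ → t, eventually ω(sₙ,tₙ) = 1). -/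
open Set Filter

/-- Multiplicativity: ω(r,s)·ω(s,t) = ω(r,t) on I_{0,1}. -/
def IsMultFn (ω : ℝ → ℝ → Bool) : Prop :=
  ∀ r s t : ℝ, 0 ≤ r → r < s → s < t → t ≤ 1 → (ω r s && ω s t) = ω r t

lemma multfn_restrict {ω : ℝ → ℝ → Bool} (hω : IsMultFn ω) {s t a b : ℝ}
    (h0 : 0 ≤ s) (h1 : t ≤ 1) (hsa : s ≤ a) (hab : a < b) (hbt : b ≤ t)
    (h : ω s t = true) : ω a b = true := by
  have hsb : ω s b = true := by
    rcases eq_or_lt_of_le hbt with rfl | hbt'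
    · exact h
    · have h2 := hω s b t h0 (lt_of_le_of_lt hsa hab) hbt' h1
      rw [h] at h2
      rw [Bool.and_eq_true] at h2; exact h2.1
  rcases eq_or_lt_of_le hsa with rfl | hsa'
  · exact hsb
  · have h2 := hω s a b h0 hsa' hab (le_trans hbt h1)
    rw [hsb] at h2
    rw [Bool.and_eq_true] at h2; exact h2.2

lemma multfn_extend {ω : ℝ → ℝ → Bool}
    (husc : ∀ s t : ℝ, 0 ≤ s → s < t → t ≤ 1 → ω s t = true →
      ∀ u v : ℕ → ℝ, (∀ n, 0 ≤ u n ∧ u n < v n ∧ v n ≤ 1) →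
        Tendsto u atTop (nhds s) → Tendsto v atTop (nhds t) →
        ∀ᶠ n in atTop, ω (u n) (v n) = true)
    {s t : ℝ} (h0 : 0 ≤ s) (hst : s < t) (h1 : t ≤ 1) (h : ω s t = true) :
    ∃ a b s' t', a < s ∧ t < b ∧ 0 ≤ s' ∧ s' < t' ∧ t' ≤ 1 ∧ ω s' t' = true ∧
      ∀ y, 0 ≤ y → y ≤ 1 → a < y → y < b → s' ≤ y ∧ y ≤ t' := by
  have hδpos : ∀ n : ℕ, (0:ℝ) < 1/(n+1) := fun n => by positivity
  have hdom : ∀ n : ℕ, 0 ≤ max 0 (s - 1/(n+1)) ∧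
      max 0 (s - 1/(n+1)) < min 1 (t + 1/(n+1)) ∧ min 1 (t + 1/(n+1)) ≤ 1 := by
    intro n
    refine ⟨le_max_left _ _, ?_, min_le_left _ _⟩
    calc max 0 (s - 1/(n+1)) ≤ s := max_le h0 (by linarith [hδpos n])
    _ < t := hst
    _ ≤ min 1 (t + 1/(n+1)) := le_min h1 (by linarith [hδpos n])
  have h1n : Tendsto (fun n : ℕ => 1/((n:ℝ)+1)) atTop (nhds 0) :=
    tendsto_one_div_add_atTop_nhds_zero_nat
  have hu : Tendsto (fun n : ℕ => max 0 (s - 1/(n+1))) atTop (nhds s) := by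
    have h2 : Tendsto (fun n : ℕ => max 0 (s - 1/(n+1))) atTop (nhds (max 0 (s - 0))) :=
      tendsto_const_nhds.max (tendsto_const_nhds.sub h1n)
    simpa [sub_zero, max_eq_right h0] using h2
  have hv : Tendsto (fun n : ℕ => min 1 (t + 1/(n+1))) atTop (nhds t) := by
    have h2 : Tendsto (fun n : ℕ => min 1 (t + 1/(n+1))) atTop (nhds (min 1 (t + 0))) :=
      tendsto_const_nhds.min (tendsto_const_nhds.add h1n)
    simpa [add_zero, min_eq_right h1] using h2
  have hE := husc s t h0 hst h1 h _ _ hdom hu hv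
  obtain ⟨N, hN⟩ := hE.exists
  refine ⟨s - 1/(N+1), t + 1/(N+1), max 0 (s - 1/(N+1)), min 1 (t + 1/(N+1)),
    by linarith [hδpos N], by linarith [hδpos N],
    (hdom N).1, (hdom N).2.1, (hdom N).2.2, hN, ?_⟩
  intro y hy0 hy1 hya hyb
  exact ⟨max_le hy0 hya.le, le_min hy1 hyb.le⟩

/-- A multiplicative {0,1}-valued function ω on I_{0,1} comes from a closed set
(ω(s,t) = 1 ↔ Z ∩ [s,t] = ∅) precisely when ω is upper semicontinuous. -/
theorem multfn_eq_omega_closed_iff_usc (ω : ℝ → ℝ → Bool) (hω : IsMultFn ω) :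
    (∃ Z : Set ℝ, IsClosed Z ∧ Z ⊆ Icc 0 1 ∧
      ∀ s t : ℝ, 0 ≤ s → s < t → t ≤ 1 → (ω s t = true ↔ Z ∩ Icc s t = ∅)) ↔
    (∀ s t : ℝ, 0 ≤ s → s < t → t ≤ 1 → ω s t = true →
      ∀ u v : ℕ → ℝ, (∀ n, 0 ≤ u n ∧ u n < v n ∧ v n ≤ 1) →
        Tendsto u atTop (nhds s) → Tendsto v atTop (nhds t) →
        ∀ᶠ n in atTop, ω (u n) (v n) = true) := by
  constructor
  · rintro ⟨Z, hZc, hZsub, hiff⟩ s t hs hst ht h u v hd hu hv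
    have hempty := (hiff s t hs hst ht).1 h
    have hsZ : s ∉ Z := fun hx => (eq_empty_iff_forall_notMem.1 hempty s) ⟨hx, le_refl s, hst.le⟩
    have htZ : t ∉ Z := fun hx => (eq_empty_iff_forall_notMem.1 hempty t) ⟨hx, hst.le, le_refl t⟩
    obtain ⟨ε₁, hε₁, hball₁⟩ := Metric.isOpen_iff.1 hZc.isOpen_compl s hsZ
    obtain ⟨ε₂, hε₂, hball₂⟩ := Metric.isOpen_iff.1 hZc.isOpen_compl t htZ
    have hE1 : ∀ᶠ n in atTop, u n ∈ Metric.ball s ε₁ := hu (Metric.ball_mem_nhds s hε₁)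
    have hE2 : ∀ᶠ n in atTop, v n ∈ Metric.ball t ε₂ := hv (Metric.ball_mem_nhds t hε₂)
    filter_upwards [hE1, hE2] with n hn1 hn2
    refine (hiff (u n) (v n) (hd n).1 (hd n).2.1 (hd n).2.2).2 ?_
    rw [eq_empty_iff_forall_notMem]
    rintro y ⟨hyZ, hy1, hy2⟩
    have hynot : y ∉ Icc s t := fun hy => (eq_empty_iff_forall_notMem.1 hempty y) ⟨hyZ, hy⟩
    rw [Set.mem_Icc, not_and_or, not_le, not_le] at hynot
    have hun : |u n - s| < ε₁ := by simpa [Real.dist_eq] using hn1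
    have hvn : |v n - t| < ε₂ := by simpa [Real.dist_eq] using hn2
    rcases hynot with hys | hyt
    · have h4 := (abs_lt.1 hun).1
      have hyb : y ∈ Metric.ball s ε₁ := by
        rw [Metric.mem_ball, Real.dist_eq, abs_lt]
        constructor <;> linarith
      exact hball₁ hyb hyZ
    · have h4 := (abs_lt.1 hvn).2
      have hyb : y ∈ Metric.ball t ε₂ := by
        rw [Metric.mem_ball, Real.dist_eq, abs_lt]
        constructor <;> linarith
      exact hball₂ hyb hyZ
  · intro husc
    refine ⟨{x : ℝ | x ∈ Icc 0 1 ∧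
        ∀ s t : ℝ, 0 ≤ s → s < t → t ≤ 1 → s ≤ x → x ≤ t → ω s t = false},
      ?_, fun x hx => hx.1, ?_⟩
    · rw [← isOpen_compl_iff, isOpen_iff_mem_nhds]
      intro x hx
      by_cases hx01 : x ∈ Icc 0 1
      · have hex : ∃ s t, 0 ≤ s ∧ s < t ∧ t ≤ 1 ∧ s ≤ x ∧ x ≤ t ∧ ω s t = true := by
          have hx' : ¬ (x ∈ Icc (0:ℝ) 1 ∧
              ∀ s t : ℝ, 0 ≤ s → s < t → t ≤ 1 → s ≤ x → x ≤ t → ω s t = false) := hx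
          push_neg at hx'
          obtain ⟨s, t, h1, h2, h3, h4, h5, h6⟩ := hx' hx01
          exact ⟨s, t, h1, h2, h3, h4, h5, by simpa using h6⟩
        obtain ⟨s, t, h1, h2, h3, h4, h5, h6⟩ := hex
        obtain ⟨a, b, s', t', has, htb, hs', hst', ht', hω', hcov⟩ :=
          multfn_extend husc h1 h2 h3 h6
        refine Filter.mem_of_superset (Ioo_mem_nhds (lt_of_lt_of_le has h4)
          (lt_of_le_of_lt h5 htb)) ?_
        rintro y ⟨hya, hyb⟩ hyZ
        have hy01 := hyZ.1
        obtain ⟨hc1, hc2⟩ := hcov y hy01.1 hy01.2 hya hyb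
        have := hyZ.2 s' t' hs' hst' ht' hc1 hc2
        rw [hω'] at this
        exact absurd this (by simp)
      · refine Filter.mem_of_superset (isClosed_Icc.isOpen_compl.mem_nhds hx01) ?_
        intro y hy hyZ
        exact hy hyZ.1
    · intro s t hs hst ht
      constructor
      · intro h
        rw [eq_empty_iff_forall_notMem]
        rintro x ⟨hxZ, hx1, hx2⟩
        have := hxZ.2 s t hs hst ht hx1 hx2
        rw [h] at this
        exact absurd this (by simp)
      · intro hZst
        set A := {x : ℝ | x ∈ Icc s t ∧ (x = s ∨ ω s x = true)} with hA
        have hsA : s ∈ A := ⟨⟨le_refl s, hst.le⟩, Or.inl rfl⟩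
        have hAne : A.Nonempty := ⟨s, hsA⟩
        have hAbdd : BddAbove A := ⟨t, fun x hx => hx.1.2⟩
        set c := sSup A with hc
        have hsc : s ≤ c := le_csSup hAbdd hsA
        have hct : c ≤ t := csSup_le hAne fun x hx => hx.1.2
        have hc01 : c ∈ Icc (0:ℝ) 1 := ⟨le_trans hs hsc, le_trans hct ht⟩
        have hcZ : c ∉ {x : ℝ | x ∈ Icc 0 1 ∧
            ∀ s t : ℝ, 0 ≤ s → s < t → t ≤ 1 → s ≤ x → x ≤ t → ω s t = false} :=
          fun hcZ => (eq_empty_iff_forall_notMem.1 hZst c) ⟨hcZ, hsc, hct⟩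
        have hex : ∃ s₀ t₀, 0 ≤ s₀ ∧ s₀ < t₀ ∧ t₀ ≤ 1 ∧ s₀ ≤ c ∧ c ≤ t₀ ∧ ω s₀ t₀ = true := by
          have hx' : ¬ (c ∈ Icc (0:ℝ) 1 ∧
              ∀ s t : ℝ, 0 ≤ s → s < t → t ≤ 1 → s ≤ c → c ≤ t → ω s t = false) := hcZ
          push_neg at hx'
          obtain ⟨s₀, t₀, h1, h2, h3, h4, h5, h6⟩ := hx' hc01
          exact ⟨s₀, t₀, h1, h2, h3, h4, h5, by simpa using h6⟩
        obtain ⟨s₀, t₀, hs₀, hlt₀, ht₀, hs₀c, hct₀, hω₀⟩ := hex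
        obtain ⟨a, b, s', t', has₀, htb₀, hs', hst', ht', hω', hcov⟩ :=
          multfn_extend husc hs₀ hlt₀ ht₀ hω₀
        have hac : a < c := lt_of_lt_of_le has₀ hs₀c
        have hcb : c < b := lt_of_le_of_lt hct₀ htb₀
        obtain ⟨x, hxA, hax⟩ := exists_lt_of_lt_csSup hAne hac
        by_cases hbt : t < b
        · have hxt : x ≤ t := hxA.1.2
          rcases eq_or_lt_of_le hxt with rfl | hxt'
          · rcases hxA.2 with h' | h'
            · exact absurd h' (ne_of_gt hst)
            · exact h'
          · have hcovt := hcov t (le_trans hs hst.le) ht (lt_of_lt_of_le hac hct) hbt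
            have hcovx := hcov x (le_trans hs hxA.1.1) (le_trans hxA.1.2 ht) hax
              (lt_of_lt_of_le hxt' (le_of_lt hbt))
            have hxt_true : ω x t = true :=
              multfn_restrict hω hs' ht' hcovx.1 hxt' hcovt.2 hω'
            rcases eq_or_lt_of_le hxA.1.1 with rfl | hsx
            · exact hxt_true
            · rcases hxA.2 with h' | h'
              · exact absurd h'.symm (ne_of_lt hsx)
              · have h3 := hω s x t hs hsx hxt' ht
                rw [h', hxt_true] at h3
                simpa using h3.symm
        · push_neg at hbt
          set y := (c + b)/2 with hy
          have hcy : c < y := by rw [hy]; linarith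
          have hyb : y < b := by rw [hy]; linarith
          have hyt : y < t := lt_of_lt_of_le hyb hbt
          have hy0 : 0 ≤ y := le_trans hs (le_trans hsc hcy.le)
          have hy1 : y ≤ 1 := le_trans hyt.le ht
          have hcovy := hcov y hy0 hy1 (lt_trans hac hcy) hyb
          have hxc : x ≤ c := le_csSup hAbdd hxA
          have hxy : x < y := lt_of_le_of_lt hxc hcy
          have hcovx := hcov x (le_trans hs hxA.1.1) (le_trans hxA.1.2 ht) hax
            (lt_trans hxy hyb)
          have hωxy : ω x y = true :=
            multfn_restrict hω hs' ht' hcovx.1 hxy hcovy.2 hω'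
          have hωsy : ω s y = true := by
            rcases eq_or_lt_of_le hxA.1.1 with rfl | hsx
            · exact hωxy
            · rcases hxA.2 with h' | h'
              · exact absurd h'.symm (ne_of_lt hsx)
              · have h3 := hω s x y hs hsx hxy hy1
                rw [h', hωxy] at h3
                simpa using h3.symm
          have hyA : y ∈ A := ⟨⟨le_trans hsc hcy.le, hyt.le⟩, Or.inr hωsy⟩
          exact absurd (le_csSup hAbdd hyA) (not_le.mpr hcy)
end

section
/- Let (X, 𝔛) be a measurable space and let M₁ ≪ M₂ be two measure types (equivalence classes of probability measures under mutual absolute continuity) on (X,𝔛). Then the set {M' : M' a measure type with M₁ ≪ M' ≪ M₂}, partially ordered by absolute continuity ≪, is a complete lattice. -/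
/-!
Under a finite measure `ν`, every family of measurable sets closed under countable unions has an
essentially largest member. Applied to the sets that are null for every member of a family `S` of
measures `≪ ν`, it yields `ν` restricted to the complement of that set as a least upper bound of
`S` for `≪`; normalizing gives a probability measure. The supremum of `S` in the interval is the
least upper bound of `S ∪ {ν₁}`, the infimum the least upper bound of the lower bounds of `S` in
the interval, among which is `ν₁`.
-/

open MeasureTheory Measure Set

namespace MeasureTheory

variable {X : Type*} [MeasurableSpace X]

/-- `N` is the union of a sequence in `C` whose measures approach `sSup (ν '' C)`. -/
theorem exists_mem_forall_measure_sdiff_eq_zero (ν : Measure X) [IsFiniteMeasure ν]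
    {C : Set (Set X)} (hC_meas : ∀ s ∈ C, MeasurableSet s)
    (hC_sUnion : ∀ D ⊆ C, D.Countable → ⋃₀ D ∈ C) :
    ∃ N ∈ C, ∀ s ∈ C, ν (s \ N) = 0 := by
  have hC_ne : (ν '' C).Nonempty :=
    ⟨_, mem_image_of_mem ν (hC_sUnion ∅ (empty_subset C) countable_empty)⟩
  obtain ⟨u, -, hu_lim, hu_mem⟩ := exists_seq_tendsto_sSup hC_ne (OrderTop.bddAbove _)
  choose t htC hνt using hu_mem
  have hNC : ⋃₀ range t ∈ C := hC_sUnion _ (range_subset_iff.2 htC) (countable_range t)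
  have hsup_le : sSup (ν '' C) ≤ ν (⋃₀ range t) :=
    le_of_tendsto' hu_lim fun n => hνt n ▸ measure_mono (subset_sUnion_of_mem (mem_range_self n))
  refine ⟨_, hNC, fun s hs => ?_⟩
  have hsN : s ∪ ⋃₀ range t ∈ C := by
    rw [← sUnion_insert]
    exact hC_sUnion _ (insert_subset hs (range_subset_iff.2 htC)) ((countable_range t).insert s)
  rw [← union_sdiff_right, measure_sdiff subset_union_right (hC_meas _ hNC).nullMeasurableSet
    (measure_ne_top ν _)]
  exact tsub_eq_zero_of_le ((le_sSup (mem_image_of_mem ν hsN)).trans hsup_le)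

theorem exists_restrict_lub_absolutelyContinuous (ν : Measure X) [IsFiniteMeasure ν]
    (S : Set (Measure X)) (hS : ∀ μ ∈ S, μ ≪ ν) :
    ∃ B : Set X, (∀ μ ∈ S, μ ≪ ν.restrict B) ∧
      ∀ ρ : Measure X, (∀ μ ∈ S, μ ≪ ρ) → ν.restrict B ≪ ρ := by
  set C : Set (Set X) := {A | MeasurableSet A ∧ ∀ μ ∈ S, μ A = 0}
  have hC_sUnion : ∀ D ⊆ C, D.Countable → ⋃₀ D ∈ C := fun D hDC hD =>
    ⟨MeasurableSet.sUnion hD fun A hA => (hDC hA).1,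
      fun μ hμ => (measure_sUnion_null_iff hD).2 fun A hA => (hDC hA).2 μ hμ⟩
  obtain ⟨N, ⟨-, hN_null⟩, hN_max⟩ :=
    exists_mem_forall_measure_sdiff_eq_zero ν (fun A hA => hA.1) hC_sUnion
  refine ⟨Nᶜ, fun μ hμ => ?_, fun ρ hρ => AbsolutelyContinuous.mk fun A hA hρA => ?_⟩
  · rw [← restrict_eq_self_of_ae_mem (compl_mem_ae_iff.2 (hN_null μ hμ))]
    exact (hS μ hμ).restrict Nᶜ
  · rw [restrict_apply hA, ← sdiff_eq]
    exact hN_max A ⟨hA, fun μ hμ => hρ μ hμ hρA⟩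

theorem exists_isProbabilityMeasure_lub_absolutelyContinuous (ν : Measure X) [IsFiniteMeasure ν]
    (S : Set (Measure X)) (hS : ∀ μ ∈ S, μ ≪ ν) {μ₀ : Measure X} (hμ₀ : μ₀ ∈ S) (hμ₀_ne : μ₀ ≠ 0) :
    ∃ l : Measure X, IsProbabilityMeasure l ∧ (∀ μ ∈ S, μ ≪ l) ∧
      ∀ ρ : Measure X, (∀ μ ∈ S, μ ≪ ρ) → l ≪ ρ := by
  obtain ⟨B, hSB, hB_least⟩ := exists_restrict_lub_absolutelyContinuous ν S hS
  have : NeZero (ν.restrict B) :=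
    ⟨fun h => hμ₀_ne (absolutelyContinuous_zero_iff.1 (h ▸ hSB μ₀ hμ₀))⟩
  exact ⟨_, isProbabilityMeasureSMul, fun μ hμ => (hSB μ hμ).trans (absolutelyContinuous_smul
    (ENNReal.inv_ne_zero.2 (measure_ne_top _ _))), fun ρ hρ =>
    smul_absolutelyContinuous.trans (hB_least ρ hρ)⟩

end MeasureTheory

/-- The interval of measure types between `M₁` and `M₂` (probability measures modulo mutual
absolute continuity, ordered by ≪) is a complete lattice: every family has a greatest
lower bound and a least upper bound in the interval (unique up to equivalence). -/
theorem measureType_interval_completeLattice {X : Type*} [MeasurableSpace X]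
    (ν₁ ν₂ : Measure X) [IsProbabilityMeasure ν₁] [IsProbabilityMeasure ν₂]
    (h12 : ν₁ ≪ ν₂) (S : Set (Measure X))
    (hS : ∀ μ ∈ S, IsProbabilityMeasure μ ∧ ν₁ ≪ μ ∧ μ ≪ ν₂) :
    (∃ g : Measure X, IsProbabilityMeasure g ∧ ν₁ ≪ g ∧ g ≪ ν₂ ∧
      (∀ μ ∈ S, g ≪ μ) ∧
      ∀ h : Measure X, IsProbabilityMeasure h → ν₁ ≪ h → h ≪ ν₂ →
        (∀ μ ∈ S, h ≪ μ) → h ≪ g) ∧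
    (∃ l : Measure X, IsProbabilityMeasure l ∧ ν₁ ≪ l ∧ l ≪ ν₂ ∧
      (∀ μ ∈ S, μ ≪ l) ∧
      ∀ h : Measure X, IsProbabilityMeasure h → ν₁ ≪ h → h ≪ ν₂ →
        (∀ μ ∈ S, μ ≪ h) → l ≪ h) := by
  constructor
  · set L := {h : Measure X | IsProbabilityMeasure h ∧ ν₁ ≪ h ∧ h ≪ ν₂ ∧ ∀ μ ∈ S, h ≪ μ}
    have hν₁L : ν₁ ∈ L := ⟨inferInstance, .rfl, h12, fun μ hμ => (hS μ hμ).2.1⟩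
    obtain ⟨g, hg, hLg, hg_least⟩ := exists_isProbabilityMeasure_lub_absolutelyContinuous ν₂ L
      (fun h hh => hh.2.2.1) hν₁L (IsProbabilityMeasure.ne_zero ν₁)
    exact ⟨g, hg, hLg ν₁ hν₁L, hg_least ν₂ fun h hh => hh.2.2.1,
      fun μ hμ => hg_least μ fun h hh => hh.2.2.2 μ hμ,
      fun h hh h1 h2 hhS => hLg h ⟨hh, h1, h2, hhS⟩⟩
  · have hS₁ : ∀ μ ∈ insert ν₁ S, μ ≪ ν₂ := forall_mem_insert.2 ⟨h12, fun μ hμ => (hS μ hμ).2.2⟩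
    obtain ⟨l, hl, hSl, hl_least⟩ := exists_isProbabilityMeasure_lub_absolutelyContinuous ν₂
      (insert ν₁ S) hS₁ (mem_insert ν₁ S) (IsProbabilityMeasure.ne_zero ν₁)
    exact ⟨l, hl, hSl ν₁ (mem_insert ν₁ S), hl_least ν₂ hS₁,
      fun μ hμ => hSl μ (mem_insert_of_mem ν₁ hμ),
      fun h _ h1 _ hSh => hl_least h (forall_mem_insert.2 ⟨h1, hSh⟩)⟩
end
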